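/- The minimum node image (MNI) support measure is anti-monotonic: if pattern p is a subgraph of pattern p', then the MNI support of p in any data graph G is at least the MNI support of p' in G. -/
import Mathlib

/-- Anti-monotonicity of the MNI support: if pattern `p` is a subgraph of `p'`
(witnessed by an injective edge-preserving map `f`), then the MNI support of
`p'` in any data graph `G` is at most the MNI support of `p` in `G`.
The domain of a pattern vertex `u` is the set of data vertices `v` such that
some edge-induced match `m` of the pattern has `m u = v`; MNI support is the
minimum domain size over pattern vertices. -/
theorem stmt_7 {V V' W : Type*} [Fintype W] [Nonempty V] [Nonempty V']
    (p : SimpleGraph V) (p' : SimpleGraph V') (G : SimpleGraph W)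
    (f : V → V') (hf : Function.Injective f)
    (hhom : ∀ u v : V, p.Adj u v → p'.Adj (f u) (f v)) :
    (⨅ u' : V', Set.ncard {v : W | ∃ m : V' → W, Function.Injective m ∧
        (∀ a b : V', p'.Adj a b → G.Adj (m a) (m b)) ∧ m u' = v}) ≤
    (⨅ u : V, Set.ncard {v : W | ∃ m : V → W, Function.Injective m ∧
        (∀ a b : V, p.Adj a b → G.Adj (m a) (m b)) ∧ m u = v}) := by
  apply le_ciInf
  intro u
  refine (ciInf_le' _ (f u)).trans ?_
  apply Set.ncard_le_ncard ?_ (Set.toFinite _)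
  rintro v ⟨m, hm, hadj, heq⟩
  exact ⟨m ∘ f, hm.comp hf, fun a b hab => hadj _ _ (hhom a b hab), heq⟩
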